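/- For every closed expression e, the CEK machine and the CESK machine operate in lock-step: for any number of steps n, the CEK machine reaches a state after n transitions from its initial configuration if and only if the CESK machine reaches the corresponding state after n transitions, where correspondence is given by the substitution function that replaces each address in an environment by the store contents at that address. -/

import Mathlib

/-! Flattening is a bisimulation between the two machines: the variable, push and switch
rules correspond directly, and a CESK β-step may use any fresh address because extending
the store at an unused address leaves every existing flattening intact. The n-step statement
follows by induction from the initial states, which correspond trivially. -/

inductive Exp : Type
  | ref : String → Exp
  | lam : String → Exp → Exp
  | app : Exp → Exp → Exp
deriving DecidableEq

def Exp.fv : Exp → List String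
  | .ref x => [x]
  | .lam x e => e.fv.filter (· ≠ x)
  | .app e₀ e₁ => e₀.fv ++ e₁.fv

def Exp.Closed (e : Exp) : Prop := e.fv = []

mutual
  inductive CEnv : Type
    | mk : List (String × CClo) → CEnv
  inductive CClo : Type
    | mk : Exp → CEnv → CClo
end

def CEnv.lookup : CEnv → String → Option CClo
  | .mk l, x => l.lookup x

def CEnv.ext : CEnv → String → CClo → CEnv
  | .mk l, x, c => .mk ((x, c) :: l)

inductive CKont : Type
  | mt
  | ar (e : Exp) (ρ : CEnv) (κ : CKont)
  | fn (v : Exp) (ρ : CEnv) (κ : CKont)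

abbrev CEKState := Exp × CEnv × CKont

inductive CEKStep : CEKState → CEKState → Prop
  | var {x ρ κ v ρ'} :
      CEnv.lookup ρ x = some (CClo.mk v ρ') →
      CEKStep (.ref x, ρ, κ) (v, ρ', κ)
  | app {e₀ e₁ ρ κ} :
      CEKStep (.app e₀ e₁, ρ, κ) (e₀, ρ, .ar e₁ ρ κ)
  | arg {x e ρ e' ρ' κ} :
      CEKStep (.lam x e, ρ, .ar e' ρ' κ) (e', ρ', .fn (.lam x e) ρ κ)
  | beta {x e ρ y e' ρ' κ} :
      CEKStep (.lam x e, ρ, .fn (.lam y e') ρ' κ)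
        (e', CEnv.ext ρ' y (CClo.mk (.lam x e) ρ), κ)

def injCEK (e : Exp) : CEKState := (e, .mk [], .mt)

/- Addresses range over the infinite set ℕ, so a fresh one always exists. -/

abbrev Addr := ℕ
abbrev SEnv := List (String × Addr)
abbrev SClo := Exp × SEnv
abbrev SStore := List (Addr × SClo)

inductive SKont : Type
  | mt
  | ar (e : Exp) (ρ : SEnv) (κ : SKont)
  | fn (v : Exp) (ρ : SEnv) (κ : SKont)

abbrev CESKState := Exp × SEnv × SStore × SKont

inductive CESKStep : CESKState → CESKState → Prop
  | var {x ρ σ κ a v ρ'} :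
      ρ.lookup x = some a → σ.lookup a = some (v, ρ') →
      CESKStep (.ref x, ρ, σ, κ) (v, ρ', σ, κ)
  | app {e₀ e₁ ρ σ κ} :
      CESKStep (.app e₀ e₁, ρ, σ, κ) (e₀, ρ, σ, .ar e₁ ρ κ)
  | arg {x e ρ σ e' ρ' κ} :
      CESKStep (.lam x e, ρ, σ, .ar e' ρ' κ) (e', ρ', σ, .fn (.lam x e) ρ κ)
  | beta {x e ρ σ y e' ρ' κ} {a : Addr} :
      σ.lookup a = none →
      CESKStep (.lam x e, ρ, σ, .fn (.lam y e') ρ' κ)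
        (e', (y, a) :: ρ', (a, (.lam x e, ρ)) :: σ, κ)

def injCESK (e : Exp) : CESKState := (e, [], [], .mt)

/- The flattening (substitution) function, as an inductive relation:
   replace each address in an environment by the store contents there. -/

inductive FlattenEnv (σ : SStore) : SEnv → CEnv → Prop
  | nil : FlattenEnv σ [] (.mk [])
  | cons {x a ρ l v ρ' ρc'} :
      σ.lookup a = some (v, ρ') →
      FlattenEnv σ ρ' ρc' →
      FlattenEnv σ ρ (.mk l) →
      FlattenEnv σ ((x, a) :: ρ) (.mk ((x, CClo.mk v ρc') :: l))

inductive FlattenKont (σ : SStore) : SKont → CKont → Prop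
  | mt : FlattenKont σ .mt .mt
  | ar {e ρ ρc κ κc} :
      FlattenEnv σ ρ ρc → FlattenKont σ κ κc →
      FlattenKont σ (.ar e ρ κ) (.ar e ρc κc)
  | fn {v ρ ρc κ κc} :
      FlattenEnv σ ρ ρc → FlattenKont σ κ κc →
      FlattenKont σ (.fn v ρ κ) (.fn v ρc κc)

def Corresponds : CESKState → CEKState → Prop
  | (e, ρ, σ, κ), (e', ρc, κc) =>
      e = e' ∧ FlattenEnv σ ρ ρc ∧ FlattenKont σ κ κc

def StepN {α : Type _} (r : α → α → Prop) : ℕ → α → α → Prop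
  | 0, a, b => a = b
  | n + 1, a, b => ∃ c, r a c ∧ StepN r n c b

theorem StepN.exists_of_simulation {α β : Type*} {r : α → α → Prop} {s : β → β → Prop}
    {R : α → β → Prop} (sim : ∀ {a a' b}, R a b → r a a' → ∃ b', s b b' ∧ R a' b') :
    ∀ (n : ℕ) {a a' b}, R a b → StepN r n a a' → ∃ b', StepN s n b b' ∧ R a' b'
  | 0, _, _, b, hR, rfl => ⟨b, rfl, hR⟩
  | n + 1, _, _, _, hR, ⟨_, hstep, hrest⟩ =>
    let ⟨b₁, hs₁, hR₁⟩ := sim hR hstep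
    let ⟨b', hs', hR'⟩ := StepN.exists_of_simulation sim n hR₁ hrest
    ⟨b', ⟨b₁, hs₁, hs'⟩, hR'⟩

theorem SStore.exists_lookup_eq_none (σ : SStore) : ∃ a : Addr, σ.lookup a = none := by
  obtain ⟨a, ha⟩ := Infinite.exists_notMem_finset (σ.map Prod.fst).toFinset
  refine ⟨a, List.lookup_eq_none_iff.2 fun p hp => bne_iff_ne.2 ?_⟩
  rintro rfl
  exact ha (List.mem_toFinset.2 (List.mem_map_of_mem hp))

namespace FlattenEnv

variable {σ : SStore} {ρ : SEnv} {ρc : CEnv}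

theorem exists_lookup_of_cek (h : FlattenEnv σ ρ ρc) {x : String} {v : Exp} {ρc' : CEnv}
    (hx : ρc.lookup x = some (CClo.mk v ρc')) :
    ∃ a ρ', ρ.lookup x = some a ∧ σ.lookup a = some (v, ρ') ∧ FlattenEnv σ ρ' ρc' := by
  induction h with
  | nil => cases hx
  | @cons y a _ _ _ ρ' _ ha hflat _ _ ih =>
    simp only [CEnv.lookup, List.lookup_cons] at hx ih ⊢
    split at hx
    · cases hx
      exact ⟨a, ρ', rfl, ha, hflat⟩
    · exact ih hx

theorem exists_lookup_of_cesk (h : FlattenEnv σ ρ ρc) {x : String} {a : Addr} {v : Exp}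
    {ρ' : SEnv} (hx : ρ.lookup x = some a) (ha : σ.lookup a = some (v, ρ')) :
    ∃ ρc', ρc.lookup x = some (CClo.mk v ρc') ∧ FlattenEnv σ ρ' ρc' := by
  induction h with
  | nil => cases hx
  | @cons y b _ _ _ _ ρc' hb hflat _ _ ih =>
    simp only [CEnv.lookup, List.lookup_cons] at hx ih ⊢
    split at hx
    · cases hx
      rw [hb] at ha
      cases ha
      exact ⟨ρc', rfl, hflat⟩
    · exact ih hx

theorem store_cons (h : FlattenEnv σ ρ ρc) {a : Addr} (ha : σ.lookup a = none) (c : SClo) :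
    FlattenEnv ((a, c) :: σ) ρ ρc := by
  induction h with
  | nil => exact .nil
  | @cons _ b _ _ _ _ _ hb _ _ ih₁ ih₂ =>
    have hba : b ≠ a := by rintro rfl; simp [hb] at ha
    refine .cons ?_ ih₁ ih₂
    rwa [List.lookup_cons, beq_eq_false_iff_ne.2 hba]

theorem bind (hρ : FlattenEnv σ ρ ρc) {ρ' : SEnv} {ρc' : CEnv} (hρ' : FlattenEnv σ ρ' ρc')
    {a : Addr} (ha : σ.lookup a = none) (y : String) (v : Exp) :
    FlattenEnv ((a, (v, ρ)) :: σ) ((y, a) :: ρ') (ρc'.ext y (CClo.mk v ρc)) := by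
  cases ρc' with
  | mk l => exact .cons (by simp) (hρ.store_cons ha _) (hρ'.store_cons ha _)

end FlattenEnv

theorem FlattenKont.store_cons {σ : SStore} {κ : SKont} {κc : CKont} (h : FlattenKont σ κ κc)
    {a : Addr} (ha : σ.lookup a = none) (c : SClo) : FlattenKont ((a, c) :: σ) κ κc := by
  induction h with
  | mt => exact .mt
  | ar hρ _ ih => exact .ar (hρ.store_cons ha c) ih
  | fn hρ _ ih => exact .fn (hρ.store_cons ha c) ih

namespace Corresponds

variable {ςs : CESKState} {ς : CEKState}

theorem exists_cesk_step (hc : Corresponds ςs ς) {ς' : CEKState} (hs : CEKStep ς ς') :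
    ∃ ςs', CESKStep ςs ςs' ∧ Corresponds ςs' ς' := by
  obtain ⟨e, ρ, σ, κ⟩ := ςs
  obtain ⟨_, hρ, hκ⟩ := hc
  subst e
  cases hs with
  | var hx =>
    obtain ⟨a, ρ', hx, ha, hflat⟩ := hρ.exists_lookup_of_cek hx
    exact ⟨_, .var hx ha, rfl, hflat, hκ⟩
  | app => exact ⟨_, .app, rfl, hρ, .ar hρ hκ⟩
  | arg =>
    cases hκ with
    | ar hρ' hκ' => exact ⟨_, .arg, rfl, hρ', .fn hρ hκ'⟩
  | beta =>
    cases hκ with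
    | fn hρ' hκ' =>
      obtain ⟨a, ha⟩ := SStore.exists_lookup_eq_none σ
      exact ⟨_, .beta ha, rfl, hρ.bind hρ' ha _ _, hκ'.store_cons ha _⟩

theorem exists_cek_step (hc : Corresponds ςs ς) {ςs' : CESKState} (hs : CESKStep ςs ςs') :
    ∃ ς', CEKStep ς ς' ∧ Corresponds ςs' ς' := by
  obtain ⟨e, ρc, κc⟩ := ς
  obtain ⟨_, hρ, hκ⟩ := hc
  subst e
  cases hs with
  | var hx ha =>
    obtain ⟨ρc', hx, hflat⟩ := hρ.exists_lookup_of_cesk hx ha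
    exact ⟨_, .var hx, rfl, hflat, hκ⟩
  | app => exact ⟨_, .app, rfl, hρ, .ar hρ hκ⟩
  | arg =>
    cases hκ with
    | ar hρ' hκ' => exact ⟨_, .arg, rfl, hρ', .fn hρ hκ'⟩
  | beta ha =>
    cases hκ with
    | fn hρ' hκ' => exact ⟨_, .beta, rfl, hρ.bind hρ' ha _ _, hκ'.store_cons ha _⟩

end Corresponds

theorem cek_cesk_lockstep (e : Exp) (he : e.Closed) (n : ℕ) :
    (∀ ς : CEKState, StepN CEKStep n (injCEK e) ς →
      ∃ ςs : CESKState, StepN CESKStep n (injCESK e) ςs ∧ Corresponds ςs ς) ∧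
    (∀ ςs : CESKState, StepN CESKStep n (injCESK e) ςs →
      ∃ ς : CEKState, StepN CEKStep n (injCEK e) ς ∧ Corresponds ςs ς) := by
  have hinit : Corresponds (injCESK e) (injCEK e) := ⟨rfl, .nil, .mt⟩
  exact ⟨fun _ => StepN.exists_of_simulation (R := flip Corresponds)
      (fun hc hs => hc.exists_cesk_step hs) n hinit,
    fun _ => StepN.exists_of_simulation (fun hc hs => hc.exists_cek_step hs) n hinit⟩
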